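/- arXiv:1512.01982 — 3 statements merged into one kernel-verified Lean document; each statement's English description precedes it below -/
import Mathlib

section
/- For a continuous map f on a compact metric space M and any point x in M, the p-omega-limit set pω_f(x) is connected in the weak* topology. -/
open MeasureTheory Filter Topology
open scoped ENNReal NNReal

variable {M : Type*} [MetricSpace M] [CompactSpace M] [MeasurableSpace M] [BorelSpace M]

/-- The empirical measure `Υ_n(x) = (1/n) ∑_{j<n} δ_{f^j(x)}` (junk value `δ_x` for `n = 0`). -/
noncomputable def emp (f : M → M) (x : M) (n : ℕ) : ProbabilityMeasure M :=
  if h : n = 0 then ⟨Measure.dirac x, inferInstance⟩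
  else ⟨(n : ℝ≥0∞)⁻¹ • ∑ j ∈ Finset.range n, Measure.dirac (f^[j] x), by
    constructor
    simp [Measure.smul_apply, Measure.coe_finset_sum, Finset.sum_apply]
    rw [ENNReal.inv_mul_cancel (by exact_mod_cast h) (by simp)]⟩

/-- The p-omega limit set: weak* limits of convergent subsequences `Υ_{n_i}(x)` with
`n_i → ∞` of the empirical measures. -/
def pomega (f : M → M) (x : M) : Set (ProbabilityMeasure M) :=
  {μ | ∃ ni : ℕ → ℕ, Tendsto ni atTop atTop ∧
        Tendsto (fun i => emp f x (ni i)) atTop (𝓝 μ)}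

/-- `μ` is `f`-invariant: `μ(f⁻¹ B) = μ B` for every Borel set `B`. -/
def InvariantProb (f : M → M) (μ : ProbabilityMeasure M) : Prop :=
  ∀ B : Set M, MeasurableSet B → μ.toMeasure (f ⁻¹' B) = μ.toMeasure B

/-- The set of `f`-invariant Borel probability measures. -/
def PfP (f : M → M) : Set (ProbabilityMeasure M) := {μ | InvariantProb f μ}

/-- Birkhoff averages `(1/n) ∑_{j<n} φ(f^j x)`. -/
noncomputable def birk (f : M → M) (φ : M → ℝ) (x : M) (n : ℕ) : ℝ :=
  (n : ℝ)⁻¹ * ∑ j ∈ Finset.range n, φ (f^[j] x)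

/-!
The consecutive empirical measures `Υ_n(x)` and `Υ_{n+1}(x)` differ by `O(1/n)` against every
bounded continuous function, so in the compact metrizable space of probability measures the
sequence `Υ_n(x)` has asymptotically vanishing steps. The set of cluster points of such a
sequence is connected: if it split into two disjoint closed pieces `A` and `B`, the sequence
would eventually stay near `A ∪ B` and could not cross the gap between the two neighbourhoods
with small steps, so it would eventually stay near one of them and the other piece could not
consist of cluster points.
-/

open Metric Set
open scoped Uniformity BoundedContinuousFunction

theorem Filter.eventually_atTop_of_frequently_of_eventually_succ {p : ℕ → Prop}
    (hstep : ∀ᶠ n in atTop, p n → p (n + 1)) (hp : ∃ᶠ n in atTop, p n) :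
    ∀ᶠ n in atTop, p n := by
  obtain ⟨N, hN⟩ := eventually_atTop.1 hstep
  obtain ⟨m, hmN, hm⟩ := frequently_atTop.1 hp N
  refine eventually_atTop.2 ⟨m, fun n hn => ?_⟩
  induction n, hn using Nat.le_induction with
  | base => exact hm
  | succ n hmn ih => exact hN n (hmN.trans hmn) ih

theorem eventually_mem_of_setOf_mapClusterPt_subset {X ι : Type*} [TopologicalSpace X]
    [CompactSpace X] {l : Filter ι} {u : ι → X} {U : Set X} (hU : IsOpen U)
    (hsub : {p | MapClusterPt p l u} ⊆ U) : ∀ᶠ n in l, u n ∈ U :=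
  isCompact_univ.tendsto_nhdsSet_of_mapClusterPt (s' := {p | MapClusterPt p l u})
    (.of_forall fun _ => mem_univ _) (fun _ _ hp => hp) (hU.mem_nhdsSet.2 hsub)

theorem MapClusterPt.mem_thickening_of_eventually_mem_thickening {X ι : Type*}
    [PseudoMetricSpace X] {l : Filter ι} {u : ι → X} {p : X} {S : Set X} {ε δ : ℝ}
    (hδ : 0 < δ) (hεδ : ε < δ) (hu : ∀ᶠ n in l, u n ∈ thickening ε S)
    (hp : MapClusterPt p l u) : p ∈ thickening δ S :=
  cthickening_subset_thickening' hδ hεδ S <| isClosed_cthickening.mem_of_mapClusterPt hp <|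
    hu.mono fun _ hn => thickening_subset_cthickening _ _ hn

theorem isConnected_setOf_mapClusterPt_of_tendsto_uniformity {X : Type*} [MetricSpace X]
    [CompactSpace X] {u : ℕ → X} (hu : Tendsto (fun n => (u n, u (n + 1))) atTop (𝓤 X)) :
    IsConnected {p | MapClusterPt p atTop u} := by
  set L := {p | MapClusterPt p atTop u}
  obtain ⟨p, -, hp⟩ := isCompact_univ.exists_mapClusterPt_of_frequently (l := atTop) (f := u)
    (.of_forall fun _ => mem_univ _)
  refine ⟨⟨p, hp⟩, isPreconnected_iff_subset_of_disjoint_closed.2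
    fun U V hU hV hLUV hLUV_disj => ?_⟩
  have hL : IsClosed L := isClosed_setOfPred_clusterPt
  have hAB : Disjoint (L ∩ U) (L ∩ V) := disjoint_left.2 fun p hpU hpV =>
    eq_empty_iff_forall_notMem.1 hLUV_disj p ⟨hpU.1, hpU.2, hpV.2⟩
  obtain ⟨δ, hδ, hdisj⟩ := hAB.exists_thickenings (hL.inter hU).isCompact (hL.inter hV)
  have hδ₂ : 0 < δ / 2 := half_pos hδ
  have hcover : ∀ᶠ n in atTop,
      u n ∈ thickening (δ / 2) (L ∩ U) ∪ thickening (δ / 2) (L ∩ V) :=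
    eventually_mem_of_setOf_mapClusterPt_subset (isOpen_thickening.union isOpen_thickening)
      fun q hq => (hLUV hq).imp (fun h => self_subset_thickening hδ₂ _ ⟨hq, h⟩)
        (fun h => self_subset_thickening hδ₂ _ ⟨hq, h⟩)
  have hinv : ∀ᶠ n in atTop, u n ∈ thickening (δ / 2) (L ∩ U) →
      u (n + 1) ∈ thickening (δ / 2) (L ∩ U) := by
    filter_upwards [hu (dist_mem_uniformity hδ₂), (tendsto_add_atTop_nat 1).eventually hcover]
      with n hstep hnext hn
    have hnear : u (n + 1) ∈ thickening δ (L ∩ U) := by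
      have := thickening_thickening_subset (δ / 2) (δ / 2) (L ∩ U)
        (mem_thickening_iff.2 ⟨u n, hn, by rw [dist_comm]; exact hstep⟩)
      rwa [add_halves] at this
    exact hnext.resolve_right fun hfar => disjoint_left.1 hdisj hnear
      (thickening_mono (half_le_self hδ.le) _ hfar)
  by_cases hfreq : ∃ᶠ n in atTop, u n ∈ thickening (δ / 2) (L ∩ U)
  · have hnearU := eventually_atTop_of_frequently_of_eventually_succ hinv hfreq
    exact .inl fun q hq => (hLUV hq).resolve_right fun hqV => disjoint_left.1 hdisj
      (hq.mem_thickening_of_eventually_mem_thickening hδ (half_lt_self hδ) hnearU)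
      (self_subset_thickening hδ _ ⟨hq, hqV⟩)
  · have hnearV : ∀ᶠ n in atTop, u n ∈ thickening (δ / 2) (L ∩ V) :=
      (hcover.and (not_frequently.1 hfreq)).mono fun n h => h.1.resolve_left h.2
    exact .inr fun q hq => (hLUV hq).resolve_left fun hqU => disjoint_left.1 hdisj
      (self_subset_thickening hδ _ ⟨hq, hqU⟩)
      (hq.mem_thickening_of_eventually_mem_thickening hδ (half_lt_self hδ) hnearV)

section

variable {α : Type*} {f : α → α} {φ : α → ℝ} {x : α}

theorem birk_succ_sub (n : ℕ) :
    birk f φ x (n + 1) - birk f φ x n = (φ (f^[n] x) - birk f φ x n) / (n + 1) := by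
  rcases eq_or_ne n 0 with rfl | hn
  · simp [birk]
  · have hn' : (n : ℝ) ≠ 0 := Nat.cast_ne_zero.2 hn
    simp only [birk, Finset.sum_range_succ, Nat.cast_succ]
    field_simp
    ring

theorem abs_birk_le {C : ℝ} (hC : ∀ y, |φ y| ≤ C) (n : ℕ) : |birk f φ x n| ≤ C := by
  rcases eq_or_ne n 0 with rfl | hn
  · simpa [birk] using (abs_nonneg _).trans (hC x)
  · have hn' : (0 : ℝ) < n := Nat.cast_pos.2 (Nat.pos_of_ne_zero hn)
    calc |birk f φ x n| = (n : ℝ)⁻¹ * |∑ j ∈ Finset.range n, φ (f^[j] x)| := by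
          rw [birk, abs_mul, abs_inv, Nat.abs_cast]
      _ ≤ (n : ℝ)⁻¹ * (n * C) := by
          gcongr
          refine (Finset.abs_sum_le_sum_abs _ _).trans ?_
          simpa using Finset.sum_le_sum fun j (_ : j ∈ Finset.range n) => hC (f^[j] x)
      _ = C := by field_simp

theorem tendsto_birk_succ_sub {C : ℝ} (hC : ∀ y, |φ y| ≤ C) :
    Tendsto (fun n => birk f φ x (n + 1) - birk f φ x n) atTop (𝓝 0) := by
  have hbound (n : ℕ) :
      ‖birk f φ x (n + 1) - birk f φ x n‖ ≤ 2 * C * (1 / ((n : ℝ) + 1)) := by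
    rw [birk_succ_sub, Real.norm_eq_abs, abs_div, abs_of_pos (by positivity : (0 : ℝ) < n + 1)]
    calc |φ (f^[n] x) - birk f φ x n| / (n + 1)
        ≤ (|φ (f^[n] x)| + |birk f φ x n|) / (n + 1) := by gcongr; exact abs_sub _ _
      _ ≤ (C + C) / (n + 1) := by gcongr; exacts [hC _, abs_birk_le hC n]
      _ = 2 * C * (1 / ((n : ℝ) + 1)) := by ring
  exact squeeze_zero_norm hbound
    (by simpa using tendsto_one_div_add_atTop_nhds_zero_nat.const_mul (2 * C))

end

section

variable {X : Type*} [TopologicalSpace X] [MeasurableSpace X]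

theorem integral_emp [OpensMeasurableSpace X] (f : X → X) (x : X) (g : X →ᵇ ℝ) {n : ℕ}
    (hn : n ≠ 0) : ∫ y, g y ∂(emp f x n : Measure X) = birk f g x n := by
  have hemp : (emp f x n : Measure X)
      = (n : ℝ≥0∞)⁻¹ • ∑ j ∈ Finset.range n, Measure.dirac (f^[j] x) :=
    congrArg (fun μ : ProbabilityMeasure X => (μ : Measure X)) (dif_neg hn)
  rw [hemp, integral_smul_measure, integral_finsetSum_measure fun j _ => g.integrable _]
  simp [birk, ENNReal.toReal_inv, integral_dirac' _ _ g.continuous.stronglyMeasurable]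

theorem eq_of_mapClusterPt_emp_succ [HasOuterApproxClosed X] [BorelSpace X] {f : X → X} {x : X}
    {p q : ProbabilityMeasure X}
    (h : MapClusterPt (p, q) atTop (fun n => (emp f x n, emp f x (n + 1)))) : p = q := by
  refine ProbabilityMeasure.toMeasure_injective
    (ext_of_forall_integral_eq_of_IsFiniteMeasure fun g => ?_)
  set F : ProbabilityMeasure X × ProbabilityMeasure X → ℝ :=
    fun μν => ∫ y, g y ∂(μν.2 : Measure X) - ∫ y, g y ∂(μν.1 : Measure X)
  have hF : Continuous F :=
    ((ProbabilityMeasure.continuous_integral_boundedContinuousFunction g).comp continuous_snd).sub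
      ((ProbabilityMeasure.continuous_integral_boundedContinuousFunction g).comp continuous_fst)
  have hlim : Tendsto (F ∘ fun n => (emp f x n, emp f x (n + 1))) atTop (𝓝 0) := by
    refine (tendsto_birk_succ_sub (f := f) (φ := g) (x := x) (C := ‖g‖) fun y => ?_).congr' ?_
    · simpa [Real.norm_eq_abs] using g.norm_coe_le_norm y
    · filter_upwards [eventually_ne_atTop 0] with n hn
      simp only [F, Function.comp_apply, integral_emp f x g hn,
        integral_emp f x g n.succ_ne_zero]
  have hF0 : F (p, q) = 0 :=
    eq_of_nhds_neBot ((h.tendsto_comp (hF.tendsto _)).neBot.mono (inf_le_inf_left _ hlim))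
  simp only [F] at hF0
  linarith

end

theorem tendsto_emp_succ_nhdsSet_diagonal (f : M → M) (x : M) :
    Tendsto (fun n => (emp f x n, emp f x (n + 1))) atTop (𝓝ˢ (diagonal _)) :=
  isCompact_univ.tendsto_nhdsSet_of_mapClusterPt (.of_forall fun _ => mem_univ _)
    fun _ _ h => eq_of_mapClusterPt_emp_succ h

theorem pomega_eq_setOf_mapClusterPt (f : M → M) (x : M) :
    pomega f x = {μ | MapClusterPt μ atTop (emp f x)} := by
  ext μ
  constructor
  · rintro ⟨ni, hni, hlim⟩
    exact hlim.mapClusterPt.of_comp hni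
  · intro h
    obtain ⟨ψ, hψ, hlim⟩ := h.tendsto_subseq
    exact ⟨ψ, hψ.tendsto_atTop, hlim⟩

theorem stmt2_general (f : M → M) (x : M) :
    IsConnected (pomega f x) := by
  let _ : MetricSpace (ProbabilityMeasure M) := TopologicalSpace.metrizableSpaceMetric _
  rw [pomega_eq_setOf_mapClusterPt]
  apply isConnected_setOf_mapClusterPt_of_tendsto_uniformity
  rw [← nhdsSet_diagonal_eq_uniformity]
  exact tendsto_emp_succ_nhdsSet_diagonal f x

/-- The p-omega-limit set is connected in the weak* topology. -/
theorem stmt2 (f : M → M) (hf : Continuous f) (x : M) :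
    IsConnected (pomega f x) :=
  stmt2_general f x
end

section
/- Let f be a continuous map on a compact metric space M satisfying the saturation property of the entropy: for every nonempty weak*-compact connected set K of invariant measures, the Bowen topological entropy of G_K := {x : pω_f(x) = K} equals inf_{μ∈K} h_μ(f). Suppose 𝒪_f ⊆ ES_f(ψ) ⊊ 𝒫_f for some continuous potential ψ, where 𝒪_f is the set of physical-like measures. Then the set Γ_f ∩ I_f of irregular points without physical-like behaviour has full topological entropy: h_top(f, Γ_f ∩ I_f) = h_top(f). -/
open MeasureTheory Filter Topology
open scoped ENNReal NNReal

variable {M : Type*} [MetricSpace M] [CompactSpace M] [MeasurableSpace M] [BorelSpace M]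

/-!
The free energy `P(μ) = h_μ(f) - ∫ ψ dμ` is affine on invariant measures and attains its
supremum `S` exactly on `ES_f(ψ) ⊇ 𝒪_f`. As `ES_f(ψ) ≠ 𝒫_f`, `P` is not constant, so every
invariant `μ` has a partner `ν` with `P ν ≠ P μ`. A short segment `K` of measures
`s ν + (1 - s) μ`, `s ∈ [a, b] ⊆ (0, 1)`, is then a compact continuum which is not a point, on
which `P < S` (a proper convex combination of two distinct values `≤ S`) and `h` is close to
`h_μ(f)`. Every point of `G_K` is irregular (its `pω` is not a singleton) and has no physical-like
behaviour (`K ∩ 𝒪_f = ∅`), while saturation gives `h_top(f, G_K) = inf_K h`. Letting `h_μ(f)`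
approach `h_top(f)` by the variational principle gives the full entropy.
-/

/-- Truncating the weight at `1` makes `t ↦ t • μ + (1 - t) • ν` total and continuous on `ℝ≥0`. -/
noncomputable def convexCombo {X : Type*} [MeasurableSpace X] (μ ν : ProbabilityMeasure X)
    (t : ℝ≥0) : ProbabilityMeasure X :=
  ⟨((min t 1 : ℝ≥0) : ℝ≥0∞) • μ.toMeasure + ((1 - min t 1 : ℝ≥0) : ℝ≥0∞) • ν.toMeasure, by
    constructor
    simp only [Measure.coe_add, Pi.add_apply, Measure.smul_apply, smul_eq_mul, measure_univ,
      mul_one]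
    rw [← ENNReal.coe_add, add_tsub_cancel_of_le (min_le_right t 1), ENNReal.coe_one]⟩

section ConvexCombo

variable {X : Type*} [MeasurableSpace X] {μ ν : ProbabilityMeasure X} {t : ℝ≥0}

lemma toMeasure_convexCombo (ht : t ≤ 1) :
    (convexCombo μ ν t).toMeasure =
      (t : ℝ≥0∞) • μ.toMeasure + ((1 - t : ℝ≥0) : ℝ≥0∞) • ν.toMeasure := by
  simp only [convexCombo, min_eq_left ht]
  rfl

lemma convexCombo_min_one : convexCombo μ ν (min t 1) = convexCombo μ ν t :=
  Subtype.ext (by simp only [convexCombo, min_le_right, min_eq_left])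

lemma convexCombo_mem_PfP {f : X → X} (hμ : μ ∈ PfP f) (hν : ν ∈ PfP f) (t : ℝ≥0) :
    convexCombo μ ν t ∈ PfP f := by
  intro B hB
  change (((min t 1 : ℝ≥0) : ℝ≥0∞) • μ.toMeasure +
    ((1 - min t 1 : ℝ≥0) : ℝ≥0∞) • ν.toMeasure) (f ⁻¹' B) = _
  simp only [Measure.coe_add, Pi.add_apply, Measure.smul_apply, smul_eq_mul, hμ B hB, hν B hB]
  rfl

lemma integral_convexCombo (ht : t ≤ 1) {g : X → ℝ} (hgμ : Integrable g μ.toMeasure)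
    (hgν : Integrable g ν.toMeasure) :
    ∫ z, g z ∂(convexCombo μ ν t).toMeasure =
      t * ∫ z, g z ∂μ.toMeasure + (1 - t) * ∫ z, g z ∂ν.toMeasure := by
  rw [toMeasure_convexCombo ht, integral_add_measure (hgμ.smul_measure ENNReal.coe_ne_top)
    (hgν.smul_measure ENNReal.coe_ne_top), integral_smul_measure, integral_smul_measure]
  simp only [ENNReal.coe_toReal, smul_eq_mul, NNReal.coe_sub ht, NNReal.coe_one]

lemma continuous_convexCombo [TopologicalSpace X] [OpensMeasurableSpace X]
    (μ ν : ProbabilityMeasure X) :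
    Continuous (convexCombo μ ν) := by
  refine continuous_iff_continuousAt.2 fun t₀ => ?_
  refine ProbabilityMeasure.tendsto_iff_forall_integral_tendsto.2 fun g => ?_
  have hg : ∀ t : ℝ≥0, ∫ z, g z ∂(convexCombo μ ν t).toMeasure =
      (min t 1 : ℝ≥0) * ∫ z, g z ∂μ.toMeasure + (1 - (min t 1 : ℝ≥0)) * ∫ z, g z ∂ν.toMeasure :=
    fun t => by
      rw [← convexCombo_min_one, integral_convexCombo (min_le_right t 1) (g.integrable _)
        (g.integrable _)]
  simp only [hg]
  exact Continuous.tendsto (by fun_prop) t₀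

lemma nontrivial_image_convexCombo (F : ProbabilityMeasure X → ℝ)
    (hF : ∀ s ≤ (1 : ℝ≥0), F (convexCombo μ ν s) = s * F μ + (1 - s) * F ν)
    (hFμν : F μ ≠ F ν) {a b : ℝ≥0} (hab : a < b) (hb : b ≤ 1) :
    (convexCombo μ ν '' Set.Icc a b).Nontrivial := by
  refine ⟨_, ⟨a, ⟨le_rfl, hab.le⟩, rfl⟩, _, ⟨b, ⟨hab.le, le_rfl⟩, rfl⟩, fun heq => hFμν ?_⟩
  have hFab := congrArg F heq
  rw [hF a (hab.le.trans hb), hF b hb] at hFab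
  have hab' : (a : ℝ) - b ≠ 0 := sub_ne_zero.2 (NNReal.coe_lt_coe.2 hab).ne
  exact sub_eq_zero.1 <| (mul_eq_zero.1 (by linear_combination hFab)).resolve_left hab'

end ConvexCombo

section Pomega

variable {X : Type*} [MetricSpace X] [MeasurableSpace X] [BorelSpace X] {f : X → X}

lemma pomega_subsingleton_of_tendsto {x : X} {μ : ProbabilityMeasure X}
    (hμ : Tendsto (emp f x) atTop (𝓝 μ)) : (pomega f x).Subsingleton := by
  have hlim : ∀ κ ∈ pomega f x, κ = μ := fun κ ⟨_, hni, hκ⟩ =>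
    tendsto_nhds_unique hκ (hμ.comp hni)
  exact fun κ hκ κ' hκ' => (hlim κ hκ).trans (hlim κ' hκ').symm

lemma setOf_pomega_eq_subset {K 𝒪 : Set (ProbabilityMeasure X)} (hK𝒪 : Disjoint K 𝒪)
    (hK : K.Nontrivial) :
    {x | pomega f x = K} ⊆
      {x | pomega f x ∩ 𝒪 = ∅} ∩ {x | ¬ ∃ μ, Tendsto (emp f x) atTop (𝓝 μ)} := by
  rintro x (hx : pomega f x = K)
  refine ⟨show pomega f x ∩ 𝒪 = ∅ from hx ▸ hK𝒪.inter_eq, fun ⟨μ, hμ⟩ => ?_⟩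
  exact hK.not_subsingleton (hx ▸ pomega_subsingleton_of_tendsto hμ)

end Pomega

lemma convex_comb_lt_of_ne {a b S t : ℝ} (ha : a ≤ S) (hb : b ≤ S) (hab : a ≠ b) (ht₀ : 0 < t)
    (ht₁ : t < 1) : t * a + (1 - t) * b < S := by
  rcases hab.lt_or_gt with hab | hab <;> nlinarith

section FreeEnergy

variable {X : Type*} [MeasurableSpace X] {f : X → X} {h : ProbabilityMeasure X → ℝ}
  {ψ : X → ℝ} {μ ν : ProbabilityMeasure X} {s : ℝ≥0}

/-- Its maximisers over `PfP f` are the equilibrium states `ES_f(ψ)`. -/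
noncomputable def freeEnergy (h : ProbabilityMeasure X → ℝ) (ψ : X → ℝ)
    (μ : ProbabilityMeasure X) : ℝ :=
  h μ - ∫ z, ψ z ∂μ.toMeasure

lemma entropy_convexCombo
    (haff : ∀ μ ∈ PfP f, ∀ ν ∈ PfP f, ∀ t : ℝ≥0, t ≤ 1 → ∀ ρ : ProbabilityMeasure X,
      ρ.toMeasure = (t : ℝ≥0∞) • μ.toMeasure + ((1 - t : ℝ≥0) : ℝ≥0∞) • ν.toMeasure →
      h ρ = (t : ℝ) * h μ + ((1 - t : ℝ≥0) : ℝ) * h ν)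
    (hμ : μ ∈ PfP f) (hν : ν ∈ PfP f) (hs : s ≤ 1) :
    h (convexCombo μ ν s) = s * h μ + (1 - s) * h ν := by
  rw [haff μ hμ ν hν s hs _ (toMeasure_convexCombo hs), NNReal.coe_sub hs, NNReal.coe_one]

lemma freeEnergy_convexCombo (hh : h (convexCombo μ ν s) = s * h μ + (1 - s) * h ν)
    (hψμ : Integrable ψ μ.toMeasure) (hψν : Integrable ψ ν.toMeasure) (hs : s ≤ 1) :
    freeEnergy h ψ (convexCombo μ ν s) = s * freeEnergy h ψ μ + (1 - s) * freeEnergy h ψ ν := by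
  simp only [freeEnergy, hh, integral_convexCombo hs hψμ hψν]
  ring

lemma bddAbove_freeEnergy [TopologicalSpace X] [CompactSpace X] [OpensMeasurableSpace X]
    {C : ℝ} (hC : ∀ ν ∈ PfP f, h ν ≤ C) (hψ : Continuous ψ) :
    BddAbove {y : ℝ | ∃ ν ∈ PfP f, y = freeEnergy h ψ ν} := by
  let ψb := BoundedContinuousFunction.mkOfCompact ⟨ψ, hψ⟩
  refine ⟨C + ‖ψb‖, ?_⟩
  rintro _ ⟨ν, hν, rfl⟩
  have hint : |∫ z, ψ z ∂ν.toMeasure| ≤ ‖ψb‖ := ψb.norm_integral_le_norm _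
  show h ν - ∫ z, ψ z ∂ν.toMeasure ≤ C + ‖ψb‖
  linarith [hC ν hν, neg_le_of_abs_le hint]

end FreeEnergy

lemma exists_Icc_of_eventually_nhds_bot {α : Type*} [TopologicalSpace α] [LinearOrder α]
    [OrderBot α] [OrderTopology α] [Nontrivial α] [DenselyOrdered α] {p : α → Prop}
    (hp : ∀ᶠ s in 𝓝 ⊥, p s) : ∃ a b : α, ⊥ < a ∧ a < b ∧ ∀ s ∈ Set.Icc a b, p s := by
  obtain ⟨c, hc₀, hc⟩ := nhds_bot_basis.eventually_iff.1 hp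
  obtain ⟨b, hb₀, hbc⟩ := exists_between hc₀
  obtain ⟨a, ha₀, hab⟩ := exists_between hb₀
  exact ⟨a, b, ha₀, hab, fun s hs => hc (hs.2.trans_lt hbc)⟩

lemma le_htop_of_lt_entropy {f : M → M} {h : ProbabilityMeasure M → ℝ} {htop : Set M → ℝ}
    (hmono : ∀ E F : Set M, E ⊆ F → htop E ≤ htop F)
    (hsat : ∀ K : Set (ProbabilityMeasure M), K ⊆ PfP f → K.Nonempty → IsCompact K →
      IsConnected K → htop {x : M | pomega f x = K} = sInf (h '' K))
    (haff : ∀ μ ∈ PfP f, ∀ ν ∈ PfP f, ∀ t : ℝ≥0, t ≤ 1 → ∀ ρ : ProbabilityMeasure M,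
      ρ.toMeasure = (t : ℝ≥0∞) • μ.toMeasure + ((1 - t : ℝ≥0) : ℝ≥0∞) • ν.toMeasure →
      h ρ = (t : ℝ) * h μ + ((1 - t : ℝ≥0) : ℝ) * h ν)
    {ψ : M → ℝ} (hψ : Continuous ψ) {S : ℝ} (hS : ∀ ν ∈ PfP f, freeEnergy h ψ ν ≤ S)
    {𝒪 : Set (ProbabilityMeasure M)} (h𝒪 : ∀ κ ∈ 𝒪, freeEnergy h ψ κ = S)
    {μ ν : ProbabilityMeasure M} (hμ : μ ∈ PfP f) (hν : ν ∈ PfP f)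
    (hμν : freeEnergy h ψ ν ≠ freeEnergy h ψ μ) {c : ℝ} (hc : c < h μ) :
    c ≤ htop ({x : M | pomega f x ∩ 𝒪 = ∅} ∩
      {x : M | ¬ ∃ μ : ProbabilityMeasure M, Tendsto (emp f x) atTop (𝓝 μ)}) := by
  have hψint : ∀ κ : ProbabilityMeasure M, Integrable ψ κ.toMeasure := fun _ =>
    hψ.integrable_of_hasCompactSupport (HasCompactSupport.of_compactSpace ψ)
  have hF : ∀ s ≤ (1 : ℝ≥0), freeEnergy h ψ (convexCombo ν μ s) =
      s * freeEnergy h ψ ν + (1 - s) * freeEnergy h ψ μ := fun s hs =>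
    freeEnergy_convexCombo (entropy_convexCombo haff hν hμ hs) (hψint ν) (hψint μ) hs
  have hnear : ∀ᶠ s : ℝ≥0 in 𝓝 ⊥, s < 1 ∧ c < s * h ν + (1 - s) * h μ := by
    have hlim : Tendsto (fun s : ℝ≥0 => (s : ℝ) * h ν + (1 - s) * h μ) (𝓝 0) (𝓝 (h μ)) :=
      Continuous.tendsto' (by fun_prop) 0 _ (by simp)
    exact (eventually_lt_nhds zero_lt_one).and (hlim.eventually_const_lt hc)
  obtain ⟨a, b, ha, hab, hIcc⟩ := exists_Icc_of_eventually_nhds_bot hnear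
  set K := convexCombo ν μ '' Set.Icc a b
  have hK : K.Nonempty := (Set.nonempty_Icc.2 hab.le).image _
  have hKO : Disjoint K 𝒪 := by
    refine Set.disjoint_left.2 ?_
    rintro _ ⟨s, hs, rfl⟩ hs𝒪
    have hs₀ : (0 : ℝ) < s := ha.trans_le hs.1
    refine (convex_comb_lt_of_ne (hS ν hν) (hS μ hμ) hμν hs₀ (hIcc s hs).1).ne ?_
    rw [← hF s (hIcc s hs).1.le, h𝒪 _ hs𝒪]
  have hKh : c ≤ sInf (h '' K) := by
    refine le_csInf (hK.image h) ?_
    rintro _ ⟨_, ⟨s, hs, rfl⟩, rfl⟩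
    rw [entropy_convexCombo haff hν hμ (hIcc s hs).1.le]
    exact (hIcc s hs).2.le
  calc c ≤ sInf (h '' K) := hKh
    _ = htop {x : M | pomega f x = K} :=
      (hsat K (Set.image_subset_iff.2 fun s _ => convexCombo_mem_PfP hν hμ s) hK
        (isCompact_Icc.image (continuous_convexCombo ν μ))
        ((isConnected_Icc hab.le).image _ (continuous_convexCombo ν μ).continuousOn)).symm
    _ ≤ _ := hmono _ _ <| setOf_pomega_eq_subset hKO <|
      nontrivial_image_convexCombo _ hF hμν hab (hIcc b ⟨hab.le, le_rfl⟩).1.le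

theorem stmt12_general (f : M → M)
    (h : ProbabilityMeasure M → ℝ) (htop : Set M → ℝ)
    (hmono : ∀ E F : Set M, E ⊆ F → htop E ≤ htop F)
    (hsat : ∀ K : Set (ProbabilityMeasure M), K ⊆ PfP f → K.Nonempty → IsCompact K →
      IsConnected K → htop {x : M | pomega f x = K} = sInf (h '' K))
    (haff : ∀ μ ∈ PfP f, ∀ ν ∈ PfP f, ∀ t : ℝ≥0, t ≤ 1 → ∀ ρ : ProbabilityMeasure M,
      ρ.toMeasure = (t : ℝ≥0∞) • μ.toMeasure + ((1 - t : ℝ≥0) : ℝ≥0∞) • ν.toMeasure →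
      h ρ = (t : ℝ) * h μ + ((1 - t : ℝ≥0) : ℝ) * h ν)
    (hvp₁ : ∀ μ ∈ PfP f, h μ ≤ htop Set.univ)
    (hvp₂ : ∀ ε : ℝ, 0 < ε → ∃ μ ∈ PfP f, htop Set.univ - ε < h μ)
    (ψ : M → ℝ) (hψ : Continuous ψ)
    (𝒪 : Set (ProbabilityMeasure M)) (h𝒪ne : 𝒪.Nonempty)
    (h𝒪ES : 𝒪 ⊆ {μ ∈ PfP f | h μ - ∫ z, ψ z ∂μ.toMeasure =
      sSup {y : ℝ | ∃ ν ∈ PfP f, y = h ν - ∫ z, ψ z ∂ν.toMeasure}})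
    (hESne : {μ ∈ PfP f | h μ - ∫ z, ψ z ∂μ.toMeasure =
      sSup {y : ℝ | ∃ ν ∈ PfP f, y = h ν - ∫ z, ψ z ∂ν.toMeasure}} ≠ PfP f) :
    htop ({x : M | pomega f x ∩ 𝒪 = ∅} ∩
        {x : M | ¬ ∃ μ : ProbabilityMeasure M, Tendsto (emp f x) atTop (𝓝 μ)}) =
      htop Set.univ := by
  set S := sSup {y : ℝ | ∃ ν ∈ PfP f, y = freeEnergy h ψ ν}
  have hS : ∀ ν ∈ PfP f, freeEnergy h ψ ν ≤ S := fun ν hν =>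
    le_csSup (bddAbove_freeEnergy hvp₁ hψ) ⟨ν, hν, rfl⟩
  obtain ⟨σ, hσ𝒪⟩ := h𝒪ne
  obtain ⟨ν₀, hν₀, hν₀S⟩ : ∃ ν ∈ PfP f, freeEnergy h ψ ν ≠ S := by
    by_contra! H
    exact hESne (Set.sep_eq_self_iff_mem_true.2 H)
  refine le_antisymm (hmono _ _ (Set.subset_univ _)) (le_of_forall_sub_le fun ε hε => ?_)
  obtain ⟨μ, hμ, hμε⟩ := hvp₂ ε hε
  obtain ⟨ν, hν, hμν⟩ : ∃ ν ∈ PfP f, freeEnergy h ψ ν ≠ freeEnergy h ψ μ := by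
    by_cases hμS : freeEnergy h ψ μ = S
    · exact ⟨ν₀, hν₀, hμS ▸ hν₀S⟩
    · exact ⟨σ, (h𝒪ES hσ𝒪).1, fun hσμ => hμS (hσμ ▸ (h𝒪ES hσ𝒪).2)⟩
  exact le_htop_of_lt_entropy hmono hsat haff hψ hS (fun κ hκ => (h𝒪ES hκ).2) hμ hν hμν hμε

/-- **Full topological entropy of the irregular points without physical-like behaviour.**
Assume `f` satisfies the saturation property of the entropy (for every nonempty
weak*-compact connected set `K` of invariant measures, the Bowen entropy of
`G_K = {x | pomega f x = K}` is `inf (h '' K)`), the entropy function is affine, the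
variational principle holds, and the nonempty set `O` of physical-like measures is
contained in the set of equilibrium states of a continuous potential `psi`, which is a
proper subset of the invariant measures.  Then the set of irregular points without
physical-like behaviour has full topological entropy. -/
theorem stmt12 (f : M → M) (hf : Continuous f)
    (h : ProbabilityMeasure M → ℝ) (htop : Set M → ℝ)
    (hmono : ∀ E F : Set M, E ⊆ F → htop E ≤ htop F)
    (hsat : ∀ K : Set (ProbabilityMeasure M), K ⊆ PfP f → K.Nonempty → IsCompact K →
      IsConnected K → htop {x : M | pomega f x = K} = sInf (h '' K))
    (haff : ∀ μ ∈ PfP f, ∀ ν ∈ PfP f, ∀ t : ℝ≥0, t ≤ 1 → ∀ ρ : ProbabilityMeasure M,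
      ρ.toMeasure = (t : ℝ≥0∞) • μ.toMeasure + ((1 - t : ℝ≥0) : ℝ≥0∞) • ν.toMeasure →
      h ρ = (t : ℝ) * h μ + ((1 - t : ℝ≥0) : ℝ) * h ν)
    (hvp₁ : ∀ μ ∈ PfP f, h μ ≤ htop Set.univ)
    (hvp₂ : ∀ ε : ℝ, 0 < ε → ∃ μ ∈ PfP f, htop Set.univ - ε < h μ)
    (ψ : M → ℝ) (hψ : Continuous ψ)
    (𝒪 : Set (ProbabilityMeasure M)) (h𝒪ne : 𝒪.Nonempty) (h𝒪cpt : IsCompact 𝒪)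
    (h𝒪ES : 𝒪 ⊆ {μ ∈ PfP f | h μ - ∫ z, ψ z ∂μ.toMeasure =
      sSup {y : ℝ | ∃ ν ∈ PfP f, y = h ν - ∫ z, ψ z ∂ν.toMeasure}})
    (hESne : {μ ∈ PfP f | h μ - ∫ z, ψ z ∂μ.toMeasure =
      sSup {y : ℝ | ∃ ν ∈ PfP f, y = h ν - ∫ z, ψ z ∂ν.toMeasure}} ≠ PfP f) :
    htop ({x : M | pomega f x ∩ 𝒪 = ∅} ∩
        {x : M | ¬ ∃ μ : ProbabilityMeasure M, Tendsto (emp f x) atTop (𝓝 μ)}) =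
      htop Set.univ :=
  stmt12_general f h htop hmono hsat haff hvp₁ hvp₂ ψ hψ 𝒪 h𝒪ne h𝒪ES hESne
end

section
/- Let f be a continuous map on a compact metric space M satisfying the saturation property of the entropy. Suppose there exist invariant measures μ₁ ∈ PE and μ₂ ∉ PE, where PE ⊆ 𝒫_f is convex, and suppose the entropy function is affine. Then for every ε > 0 there exists a nonempty weak*-compact connected set K ⊆ 𝒫_f \ PE which is not a singleton, such that inf_{μ∈K} h_μ(f) > sup_{ν∈𝒫_f} h_ν(f) − ε. -/
/-!
Along the segment `t ↦ t α + (1 - t) β` from `α ∈ PE` to `β ∉ PE` the entropy is affine, hence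
continuous, and the points with `t < 1` lie outside `PE`. Take `ν` with `h ν > sup h - ε`: if
`ν ∈ PE` it is the endpoint `t = 1` of the segment from `ν` to `μ₂`, otherwise the endpoint `t = 0`
of the segment from `μ₁` to `ν`. By continuity the entropy exceeds `sup h - ε` on a short
interval `[a, b] ⊆ [0, 1)` near that endpoint, and `K` is the image of `[a, b]`: compact and
connected as a continuous image, and not a singleton because the segment is injective.
-/

open MeasureTheory Filter Topology
open scoped ENNReal NNReal

variable {M : Type*} [MetricSpace M] [CompactSpace M] [MeasurableSpace M] [BorelSpace M]

open Set

section Mixture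

variable {Ω : Type*} [MeasurableSpace Ω] (α β : ProbabilityMeasure Ω)

-- The weight is clamped to `[0, 1]`, so that `probMix α β` is a continuous path on all of `ℝ≥0`.
noncomputable def probMix (t : ℝ≥0) : ProbabilityMeasure Ω :=
  ⟨min t 1 • α.toMeasure + (1 - min t 1) • β.toMeasure, ⟨by simp⟩⟩

lemma probMix_min_one (t : ℝ≥0) : probMix α β (min t 1) = probMix α β t := by
  simp only [probMix, min_assoc, min_self]
  rfl

lemma probMix_toMeasure {t : ℝ≥0} (ht : t ≤ 1) :
    (probMix α β t).toMeasure
      = (t : ℝ≥0∞) • α.toMeasure + ((1 - t : ℝ≥0) : ℝ≥0∞) • β.toMeasure := by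
  simp only [probMix, min_eq_left ht, Measure.coe_nnreal_smul]
  rfl

@[simp] lemma probMix_one : probMix α β 1 = α := by
  ext1; simp [probMix]

@[simp] lemma probMix_zero : probMix α β 0 = β := by
  ext1; simp [probMix]

lemma probMix_injOn {α β : ProbabilityMeasure Ω} (hαβ : α ≠ β) : InjOn (probMix α β) (Iic 1) := by
  obtain ⟨B, hB⟩ : ∃ B, α.toMeasure B ≠ β.toMeasure B := by
    by_contra! hall
    exact hαβ (Subtype.ext (Measure.ext_iff'.2 hall))
  have hB' : α.toMeasure.real B ≠ β.toMeasure.real B :=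
    fun heq => hB ((ENNReal.toReal_eq_toReal_iff' (by finiteness) (by finiteness)).1 heq)
  have hreal : ∀ t : ℝ≥0, t ≤ 1 → (probMix α β t).toMeasure.real B
      = t * α.toMeasure.real B + (1 - t) * β.toMeasure.real B := by
    intro t ht
    simp only [probMix, min_eq_left ht, ProbabilityMeasure.coe_mk]
    rw [measureReal_add_apply, measureReal_nnreal_smul_apply, measureReal_nnreal_smul_apply,
      NNReal.coe_sub ht, NNReal.coe_one]
  intro s hs t ht hst
  have hB_eq := congrArg (fun μ : ProbabilityMeasure Ω => μ.toMeasure.real B) hst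
  simp only [hreal s hs, hreal t ht] at hB_eq
  have hprod : ((s : ℝ) - t) * (α.toMeasure.real B - β.toMeasure.real B) = 0 := by linarith
  exact NNReal.coe_injective <| sub_eq_zero.1 <|
    (mul_eq_zero.1 hprod).resolve_right (sub_ne_zero.2 hB')

lemma nontrivial_probMix_image_Icc {α β : ProbabilityMeasure Ω} (hαβ : α ≠ β) {a b : ℝ≥0}
    (hab : a < b) (hb : b ≤ 1) : (probMix α β '' Icc a b).Nontrivial := by
  have hIcc : (Icc a b).Nontrivial :=
    ⟨a, left_mem_Icc.2 hab.le, b, right_mem_Icc.2 hab.le, hab.ne⟩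
  exact hIcc.image_of_injOn ((probMix_injOn hαβ).mono fun _ ht => ht.2.trans hb)

lemma continuous_comp_probMix_of_affine {h : ProbabilityMeasure Ω → ℝ}
    (haff : ∀ t ≤ 1, h (probMix α β t) = t * h α + ((1 - t : ℝ≥0) : ℝ) * h β) :
    Continuous fun t => h (probMix α β t) := by
  have : (fun t => h (probMix α β t))
      = fun t => (min t 1 : ℝ≥0) * h α + ((1 - min t 1 : ℝ≥0) : ℝ) * h β := by
    funext t
    rw [← probMix_min_one, haff _ (min_le_right _ _)]
  rw [this]
  fun_prop

lemma continuous_probMix [TopologicalSpace Ω] [OpensMeasurableSpace Ω] :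
    Continuous (probMix α β) := by
  refine (ProbabilityMeasure.toFiniteMeasure_isEmbedding Ω).continuous_iff.2 ?_
  convert (show Continuous fun t : ℝ≥0 =>
      min t 1 • α.toFiniteMeasure + (1 - min t 1) • β.toFiniteMeasure by fun_prop) using 1
  funext t
  exact FiniteMeasure.toMeasure_injective rfl

lemma probMix_mem_PfP (f : Ω → Ω) {α β : ProbabilityMeasure Ω}
    (hα : α ∈ PfP f) (hβ : β ∈ PfP f) (t : ℝ≥0) : probMix α β t ∈ PfP f := by
  intro B hB
  simp [probMix, hα B hB, hβ B hB]

end Mixture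

theorem IsOpen.exists_Icc_subset_inter_Iio {X : Type*} [LinearOrder X] [TopologicalSpace X]
    [OrderTopology X] [DenselyOrdered X] {U : Set X} (hU : IsOpen U) {x c : X}
    (hx : x ∈ U) (hxc : x ≤ c) (hc : (Iio c).Nonempty) :
    ∃ a b, a < b ∧ Icc a b ⊆ U ∩ Iio c := by
  have hne : (U ∩ Iio c).Nonempty :=
    mem_closure_iff.1 (by rwa [closure_Iio' hc]) U hU hx
  have : Nontrivial X := ⟨⟨hc.some, c, hc.some_mem.ne⟩⟩
  obtain ⟨a, b, hab, hsub⟩ := (hU.inter isOpen_Iio).exists_Ioo_subset hne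
  obtain ⟨a', ha', ha'b⟩ := exists_between hab
  obtain ⟨b', hb', hb'b⟩ := exists_between ha'b
  exact ⟨a', b', hb', (Icc_subset_Ioo ha' hb'b).trans hsub⟩

theorem stmt15_general (f : M → M)
    (h : ProbabilityMeasure M → ℝ)
    (haff : ∀ μ ∈ PfP f, ∀ ν ∈ PfP f, ∀ t : ℝ≥0, t ≤ 1 → ∀ ρ : ProbabilityMeasure M,
      ρ.toMeasure = (t : ℝ≥0∞) • μ.toMeasure + ((1 - t : ℝ≥0) : ℝ≥0∞) • ν.toMeasure →
      h ρ = (t : ℝ) * h μ + ((1 - t : ℝ≥0) : ℝ) * h ν)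
    (PE : Set (ProbabilityMeasure M)) (hPEsub : PE ⊆ PfP f)
    (hext : ∀ μ ∈ PE, ∀ ν ∈ PfP f \ PE, ∀ t : ℝ≥0, t < 1 → ∀ ρ : ProbabilityMeasure M,
      ρ.toMeasure = (t : ℝ≥0∞) • μ.toMeasure + ((1 - t : ℝ≥0) : ℝ≥0∞) • ν.toMeasure →
      ρ ∉ PE)
    (μ₁ : ProbabilityMeasure M) (hμ₁ : μ₁ ∈ PE)
    (μ₂ : ProbabilityMeasure M) (hμ₂ : μ₂ ∈ PfP f \ PE) :
    ∀ ε : ℝ, 0 < ε → ∃ K : Set (ProbabilityMeasure M),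
      K ⊆ PfP f \ PE ∧ K.Nonempty ∧ IsCompact K ∧ IsConnected K ∧
      (¬ ∃ μ : ProbabilityMeasure M, K = {μ}) ∧
      ∀ μ ∈ K, sSup (h '' PfP f) - ε < h μ := by
  intro ε hε
  obtain ⟨_, ⟨ν, hν, rfl⟩, hνε⟩ :=
    exists_lt_of_lt_csSup (Nonempty.image h ⟨μ₂, hμ₂.1⟩) (sub_lt_self (sSup (h '' PfP f)) hε)
  obtain ⟨α, hα, β, hβ, t₀, ht₀, rfl⟩ :
      ∃ α ∈ PE, ∃ β ∈ PfP f \ PE, ∃ t₀ ≤ (1 : ℝ≥0), probMix α β t₀ = ν := by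
    by_cases hνPE : ν ∈ PE
    · exact ⟨ν, hνPE, μ₂, hμ₂, 1, le_rfl, probMix_one ν μ₂⟩
    · exact ⟨μ₁, hμ₁, ν, ⟨hν, hνPE⟩, 0, zero_le_one, probMix_zero μ₁ ν⟩
  have hent : Continuous fun t => h (probMix α β t) := continuous_comp_probMix_of_affine α β
    fun t ht => haff α (hPEsub hα) β hβ.1 t ht _ (probMix_toMeasure α β ht)
  obtain ⟨a, b, hab, habU⟩ := (isOpen_lt continuous_const hent).exists_Icc_subset_inter_Iio
    hνε ht₀ ⟨0, mem_Iio.2 zero_lt_one⟩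
  refine ⟨probMix α β '' Icc a b, ?_, (nonempty_Icc.2 hab.le).image _,
    isCompact_Icc.image (continuous_probMix α β),
    (isConnected_Icc hab.le).image _ (continuous_probMix α β).continuousOn, ?_, ?_⟩
  · rintro _ ⟨t, ht, rfl⟩
    have ht1 : t < 1 := (habU ht).2
    exact ⟨probMix_mem_PfP f (hPEsub hα) hβ.1 t,
      hext α hα β hβ t ht1 _ (probMix_toMeasure α β ht1.le)⟩
  · rintro ⟨μ, hK⟩
    exact (nontrivial_probMix_image_Icc (ne_of_mem_of_not_mem hα hβ.2) hab
      (habU (right_mem_Icc.2 hab.le)).2.le).ne_singleton hK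
  · rintro _ ⟨t, ht, rfl⟩
    exact (habU ht).1

/-- Under the saturation property of the entropy, affinity of the entropy function and
the existence of invariant measures inside and outside the convex set `PE`, for every
`ε > 0` there is a nonempty weak*-compact connected non-singleton set
`K ⊆ 𝒫_f \ PE` with `inf_{μ ∈ K} h(μ) > sup_{ν ∈ 𝒫_f} h(ν) - ε`. -/
theorem stmt15 (f : M → M) (hf : Continuous f)
    (h : ProbabilityMeasure M → ℝ) (htop : Set M → ℝ)
    (hsat : ∀ K : Set (ProbabilityMeasure M), K ⊆ PfP f → K.Nonempty → IsCompact K →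
      IsConnected K → htop {x : M | pomega f x = K} = sInf (h '' K))
    (haff : ∀ μ ∈ PfP f, ∀ ν ∈ PfP f, ∀ t : ℝ≥0, t ≤ 1 → ∀ ρ : ProbabilityMeasure M,
      ρ.toMeasure = (t : ℝ≥0∞) • μ.toMeasure + ((1 - t : ℝ≥0) : ℝ≥0∞) • ν.toMeasure →
      h ρ = (t : ℝ) * h μ + ((1 - t : ℝ≥0) : ℝ) * h ν)
    (hnonneg : ∀ μ ∈ PfP f, 0 ≤ h μ)
    (hbdd : BddAbove (h '' PfP f))
    (PE : Set (ProbabilityMeasure M)) (hPEsub : PE ⊆ PfP f)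
    (hPEconv : ∀ μ ∈ PE, ∀ ν ∈ PE, ∀ t : ℝ≥0, t ≤ 1 → ∀ ρ : ProbabilityMeasure M,
      ρ.toMeasure = (t : ℝ≥0∞) • μ.toMeasure + ((1 - t : ℝ≥0) : ℝ≥0∞) • ν.toMeasure →
      ρ ∈ PE)
    (hext : ∀ μ ∈ PE, ∀ ν ∈ PfP f \ PE, ∀ t : ℝ≥0, t < 1 → ∀ ρ : ProbabilityMeasure M,
      ρ.toMeasure = (t : ℝ≥0∞) • μ.toMeasure + ((1 - t : ℝ≥0) : ℝ≥0∞) • ν.toMeasure →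
      ρ ∉ PE)
    (μ₁ : ProbabilityMeasure M) (hμ₁ : μ₁ ∈ PE)
    (μ₂ : ProbabilityMeasure M) (hμ₂ : μ₂ ∈ PfP f \ PE) :
    ∀ ε : ℝ, 0 < ε → ∃ K : Set (ProbabilityMeasure M),
      K ⊆ PfP f \ PE ∧ K.Nonempty ∧ IsCompact K ∧ IsConnected K ∧
      (¬ ∃ μ : ProbabilityMeasure M, K = {μ}) ∧
      ∀ μ ∈ K, sSup (h '' PfP f) - ε < h μ :=
  stmt15_general f h haff PE hPEsub hext μ₁ hμ₁ μ₂ hμ₂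
end
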